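/- arXiv:2306.16653 — 2 statements merged into one kernel-verified Lean document; each statement's English description precedes it below -/
import Mathlib

section
/- Let P be the canonical probability measure on the Cantor set. The distortion error of the two-point set β = {(1/6, 1/2), (5/6, 1/2)} ⊂ ℝ², namely ∫ min_{a∈β} ρ(x,a) dP(x) with ρ(x,(a,b)) = (x-a)² + b², equals 19/72, and β minimizes this distortion error over all two-point subsets of the segment S₂ = {(x, 1/2) : 0 ≤ x ≤ 1}. -/
open MeasureTheory Real Set Filter
open scoped ENNReal Topology

noncomputable section

/-- First generating map of the Cantor set. -/
def T1 (x : ℝ) : ℝ := x / 3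

/-- Second generating map of the Cantor set. -/
def T2 (x : ℝ) : ℝ := x / 3 + 2 / 3

/-- Map indexed by `Fin 2`. -/
def Tm : Fin 2 → ℝ → ℝ := ![T1, T2]

/-- Composition `T_σ = T_{σ₁} ∘ ⋯ ∘ T_{σ_k}` for a word over `{1,2}` (as a list over `Fin 2`). -/
def Tw (l : List (Fin 2)) : ℝ → ℝ := l.foldr (fun i g => Tm i ∘ g) id

/-- Squared Euclidean distance between `x ∈ ℝ` (identified with `(x,0)`) and `(a,b) ∈ ℝ²`. -/
def rho (x : ℝ) (p : ℝ × ℝ) : ℝ := (x - p.1) ^ 2 + p.2 ^ 2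

/-- Distortion error of a set `α ⊆ ℝ²` for `P`. -/
def distortion (P : Measure ℝ) (α : Set (ℝ × ℝ)) : ℝ := ∫ x, ⨅ a : α, rho x (a : ℝ × ℝ) ∂P

/-- The constraint `S_j = {(x, 1/j) : 0 ≤ x ≤ 1}`. -/
def Sj (j : ℕ) : Set (ℝ × ℝ) := {p | p.1 ∈ Icc (0 : ℝ) 1 ∧ p.2 = 1 / (j : ℝ)}

/-- The `n`th constrained quantization error for `P` with respect to the family `Sj`. -/
def Vc (P : Measure ℝ) (n : ℕ) : ℝ :=
  sInf {e : ℝ | ∃ α : Finset (ℝ × ℝ), α.Nonempty ∧ α.card ≤ n ∧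
    (↑α : Set (ℝ × ℝ)) ⊆ ⋃ j ∈ Finset.Icc 1 n, Sj j ∧ e = distortion P (↑α : Set (ℝ × ℝ))}

/-!
Self-similarity pins down the distribution function `F` of `P` through
`F t = (F (3t) + F (3t - 2)) / 2`, which forces `F 0 = 0` and `F 1 = 1`, so `P` lives on
`[0, 1]`. On continuous functions it then gives `∫ x dP = 1/2`, `∫ x² dP = 3/8` and
`∫ |x - m| dP = 1/3` for every `m ∈ [1/3, 2/3]`. Since `min u v = (u + v)/2 - |u - v|/2`,
the distortion of `{(a, c), (b, c)}` is
`3/8 - (a+b)/2 + (a² + b²)/2 + c² - |b - a| ∫ |x - (a+b)/2| dP`; as `m ↦ ∫ |x - m| dP` is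
`1`-Lipschitz, an elementary inequality bounds this below by `19/72` when `c = 1/2`, with
equality at `a = 1/6`, `b = 5/6`.
-/

open ProbabilityTheory

def IsCantorMeasure (P : Measure ℝ) : Prop :=
  P = (1 / 2 : ℝ≥0∞) • P.map T1 + (1 / 2 : ℝ≥0∞) • P.map T2

theorem Continuous.integrable_of_ae_mem_compact {X E : Type*} [TopologicalSpace X] [T2Space X]
    [MeasurableSpace X] [OpensMeasurableSpace X] [NormedAddCommGroup E] {μ : Measure X}
    [IsFiniteMeasureOnCompacts μ] {K : Set X} (hK : IsCompact K) (hμK : ∀ᵐ x ∂μ, x ∈ K)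
    {f : X → E} (hf : Continuous f) : Integrable f μ := by
  simpa only [IntegrableOn, Measure.restrict_eq_self_of_ae_mem hμK] using
    hf.continuousOn.integrableOn_compact (μ := μ) hK

theorem integral_quadratic {μ : Measure ℝ} [IsProbabilityMeasure μ]
    (h1 : Integrable (fun x => x) μ) (h2 : Integrable (fun x => x ^ 2) μ) (a b c : ℝ) :
    ∫ x, (a * x ^ 2 + b * x + c) ∂μ = a * ∫ x, x ^ 2 ∂μ + b * ∫ x, x ∂μ + c := by
  rw [integral_add ((h2.const_mul a).fun_add (h1.const_mul b)) (integrable_const c),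
    integral_add (h2.const_mul a) (h1.const_mul b), integral_const_mul, integral_const_mul,
    integral_const, probReal_univ, one_smul]

theorem integral_abs_sub_le {μ : Measure ℝ} [IsProbabilityMeasure μ]
    (h : Integrable (fun x => x) μ) (m c : ℝ) :
    ∫ x, |x - m| ∂μ ≤ ∫ x, |x - c| ∂μ + |c - m| := by
  have hc : Integrable (fun x => |x - c|) μ := (h.sub' (integrable_const c)).abs
  calc ∫ x, |x - m| ∂μ ≤ ∫ x, (|x - c| + |c - m|) ∂μ :=
        integral_mono (h.sub' (integrable_const m)).abs (hc.fun_add (integrable_const _))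
          fun x => abs_sub_le x c m
    _ = ∫ x, |x - c| ∂μ + |c - m| := by
        rw [integral_add hc (integrable_const _), integral_const, probReal_univ, one_smul]

lemma min_rho_eq (x a b c : ℝ) :
    min (rho x (a, c)) (rho x (b, c)) =
      x ^ 2 - (a + b) * x + ((a ^ 2 + b ^ 2) / 2 + c ^ 2) - |b - a| * |x - (a + b) / 2| := by
  rw [← abs_mul]
  unfold rho
  rcases le_total ((x - a) ^ 2) ((x - b) ^ 2) with h | h
  · rw [min_eq_left (by linarith), abs_of_nonpos (by nlinarith)]
    ring
  · rw [min_eq_right (by linarith), abs_of_nonneg (by nlinarith)]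
    ring

lemma measurable_T1 : Measurable T1 := by unfold T1; fun_prop

lemma measurable_T2 : Measurable T2 := by unfold T2; fun_prop

namespace IsCantorMeasure

variable {P : Measure ℝ} [IsProbabilityMeasure P] (hP : IsCantorMeasure P)
include hP

lemma measureReal_eq {s : Set ℝ} (hs : MeasurableSet s) :
    P.real s = (P.real (T1 ⁻¹' s) + P.real (T2 ⁻¹' s)) / 2 := by
  conv_lhs => rw [hP]
  simp only [measureReal_def, Measure.add_apply, Measure.smul_apply,
    Measure.map_apply measurable_T1 hs, Measure.map_apply measurable_T2 hs, smul_eq_mul]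
  rw [ENNReal.toReal_add (by finiteness) (by finiteness)]
  simp only [ENNReal.toReal_mul]
  norm_num
  ring

lemma cdf_eq (t : ℝ) : cdf P t = (cdf P (3 * t) + cdf P (3 * t - 2)) / 2 := by
  have h1 : T1 ⁻¹' Iic t = Iic (3 * t) := by
    ext x
    simp only [mem_preimage, mem_Iic, T1]
    constructor <;> intro <;> linarith
  have h2 : T2 ⁻¹' Iic t = Iic (3 * t - 2) := by
    ext x
    simp only [mem_preimage, mem_Iic, T2]
    constructor <;> intro <;> linarith
  simp only [cdf_eq_real]
  rw [measureReal_eq hP measurableSet_Iic, h1, h2]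

lemma cdf_one : cdf P 1 = 1 := by
  have step (t : ℝ) (ht : 1 ≤ t) : cdf P (3 * t) ≤ cdf P t := by
    have := monotone_cdf P (show t ≤ 3 * t - 2 by linarith)
    linarith [cdf_eq hP t]
  have h (n : ℕ) : cdf P (3 ^ n) ≤ cdf P 1 := by
    induction n with
    | zero => simp
    | succ n ih =>
      calc cdf P (3 ^ (n + 1)) = cdf P (3 * 3 ^ n) := by rw [pow_succ']
        _ ≤ cdf P (3 ^ n) := step _ (one_le_pow₀ (by norm_num))
        _ ≤ cdf P 1 := ih
  exact le_antisymm (cdf_le_one P 1) <| le_of_tendsto' ((tendsto_cdf_atTop P).comp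
    (tendsto_pow_atTop_atTop_of_one_lt (by norm_num : (1 : ℝ) < 3))) h

lemma cdf_zero : cdf P 0 = 0 := by
  have step (t : ℝ) (ht : t ≤ 0) : cdf P t ≤ cdf P (3 * t - 2) := by
    have := monotone_cdf P (show 3 * t ≤ t by linarith)
    linarith [cdf_eq hP t]
  have h (n : ℕ) : cdf P 0 ≤ cdf P (1 - 3 ^ n) := by
    induction n with
    | zero => simp
    | succ n ih =>
      calc cdf P 0 ≤ cdf P (1 - 3 ^ n) := ih
        _ ≤ cdf P (3 * (1 - 3 ^ n) - 2) :=
          step _ (sub_nonpos.2 (one_le_pow₀ (by norm_num)))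
        _ = cdf P (1 - 3 ^ (n + 1)) := by ring_nf
  have htend : Tendsto (fun n : ℕ => cdf P (1 - 3 ^ n)) atTop (𝓝 0) :=
    (tendsto_cdf_atBot P).comp <| tendsto_atBot_add_const_left _ _ <|
      tendsto_neg_atTop_atBot.comp (tendsto_pow_atTop_atTop_of_one_lt (by norm_num))
  exact le_antisymm (ge_of_tendsto' htend h) (cdf_nonneg P 0)

lemma ae_mem_Icc : ∀ᵐ x ∂P, x ∈ Icc (0 : ℝ) 1 := by
  have h0 : P (Iic 0) = 0 := by rw [← ofReal_cdf, cdf_zero hP, ENNReal.ofReal_zero]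
  have h1 : P (Iic 1)ᶜ = 0 := by
    rw [prob_compl_eq_one_sub measurableSet_Iic, ← ofReal_cdf, cdf_one hP, ENNReal.ofReal_one,
      tsub_self]
  refine measure_mono_null (fun x hx => ?_) (measure_union_null h0 h1)
  by_contra hx'
  simp only [mem_union, mem_Iic, mem_compl_iff, not_or, not_le, not_lt] at hx'
  exact hx ⟨hx'.1.le, hx'.2⟩

lemma integrable {f : ℝ → ℝ} (hf : Continuous f) : Integrable f P :=
  hf.integrable_of_ae_mem_compact isCompact_Icc hP.ae_mem_Icc

lemma integral_eq {f : ℝ → ℝ} (hf : Continuous f) :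
    ∫ x, f x ∂P = (∫ x, f (x / 3) ∂P + ∫ x, f (x / 3 + 2 / 3) ∂P) / 2 := by
  have h1 : Integrable f (P.map T1) :=
    (integrable_map_measure hf.aestronglyMeasurable measurable_T1.aemeasurable).2
      (hP.integrable (hf.comp (by unfold T1; fun_prop)))
  have h2 : Integrable f (P.map T2) :=
    (integrable_map_measure hf.aestronglyMeasurable measurable_T2.aemeasurable).2
      (hP.integrable (hf.comp (by unfold T2; fun_prop)))
  conv_lhs => rw [hP]
  rw [integral_add_measure (h1.smul_measure (by norm_num)) (h2.smul_measure (by norm_num)),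
    integral_smul_measure, integral_smul_measure,
    integral_map measurable_T1.aemeasurable hf.aestronglyMeasurable,
    integral_map measurable_T2.aemeasurable hf.aestronglyMeasurable]
  simp only [T1, T2, smul_eq_mul]
  norm_num
  ring

lemma integral_id : ∫ x, x ∂P = 1 / 2 := by
  have h := hP.integral_eq continuous_id
  have e : ∫ x, (x / 3 + 2 / 3) ∂P = (∫ x, x ∂P) / 3 + 2 / 3 := by
    rw [integral_add (hP.integrable (by fun_prop)) (integrable_const _),
      integral_div, integral_const, probReal_univ, one_smul]
  simp only [id, integral_div, e] at h
  linarith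

lemma integral_sq : ∫ x, x ^ 2 ∂P = 3 / 8 := by
  have h := hP.integral_eq (continuous_pow 2)
  have e1 : ∫ x, (x / 3) ^ 2 ∂P = (∫ x, x ^ 2 ∂P) / 9 := by
    simp only [div_pow, integral_div]
    norm_num
  have e2 : ∫ x, (x / 3 + 2 / 3) ^ 2 ∂P =
      (∫ x, x ^ 2 ∂P) / 9 + 4 / 9 * ∫ x, x ∂P + 4 / 9 := by
    simp_rw [show ∀ x : ℝ, (x / 3 + 2 / 3) ^ 2 = 1 / 9 * x ^ 2 + 4 / 9 * x + 4 / 9 by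
      intro; ring]
    rw [integral_quadratic (hP.integrable continuous_id) (hP.integrable (continuous_pow 2))]
    ring
  rw [e1, e2, hP.integral_id] at h
  linarith

lemma integral_abs_sub_of_mem_Icc {m : ℝ} (hm : m ∈ Icc (1 / 3 : ℝ) (2 / 3)) :
    ∫ x, |x - m| ∂P = 1 / 3 := by
  have hx : Integrable (fun x : ℝ => x) P := hP.integrable continuous_id
  have h := hP.integral_eq (f := fun x => |x - m|) (by fun_prop)
  have e1 : ∫ x, |x / 3 - m| ∂P = m - 1 / 6 := by
    rw [integral_congr_ae (g := fun x => m - x / 3) ?_, integral_sub (integrable_const _)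
      (hx.div_const 3), integral_div, integral_const, hP.integral_id, probReal_univ, one_smul]
    · ring
    filter_upwards [hP.ae_mem_Icc] with x hx
    rw [abs_of_nonpos (by linarith [hx.2, hm.1])]
    ring
  have e2 : ∫ x, |x / 3 + 2 / 3 - m| ∂P = 5 / 6 - m := by
    rw [integral_congr_ae (g := fun x => x / 3 + (2 / 3 - m)) ?_, integral_add (hx.div_const 3)
      (integrable_const _), integral_div, integral_const, hP.integral_id, probReal_univ, one_smul]
    · ring
    filter_upwards [hP.ae_mem_Icc] with x hx
    rw [abs_of_nonneg (by linarith [hx.1, hm.2])]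
    ring
  rw [e1, e2] at h
  linarith

lemma integral_min_rho (a b c : ℝ) :
    ∫ x, min (rho x (a, c)) (rho x (b, c)) ∂P =
      3 / 8 - (a + b) / 2 + ((a ^ 2 + b ^ 2) / 2 + c ^ 2) -
        |b - a| * ∫ x, |x - (a + b) / 2| ∂P := by
  have hx : Integrable (fun x : ℝ => x) P := hP.integrable continuous_id
  have hx2 : Integrable (fun x : ℝ => x ^ 2) P := hP.integrable (continuous_pow 2)
  have hq := integral_quadratic hx hx2 1 (-(a + b)) ((a ^ 2 + b ^ 2) / 2 + c ^ 2)
  simp only [one_mul, neg_mul, ← sub_eq_add_neg, hP.integral_sq, hP.integral_id] at hq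
  simp_rw [min_rho_eq]
  rw [integral_sub ((hx2.sub' (hx.const_mul _)).fun_add (integrable_const _))
    ((hP.integrable (by fun_prop)).const_mul _), integral_const_mul, hq]
  ring

end IsCantorMeasure

lemma nineteen_div_seventyTwo_le {a b H : ℝ}
    (ha : a ∈ Icc (0 : ℝ) 1) (hb : b ∈ Icc (0 : ℝ) 1)
    (hH : ∀ c ∈ Icc (1 / 3 : ℝ) (2 / 3), H ≤ 1 / 3 + |c - (a + b) / 2|) :
    19 / 72 ≤ 3 / 8 - (a + b) / 2 + ((a ^ 2 + b ^ 2) / 2 + (1 / 2) ^ 2) - |b - a| * H := by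
  obtain ⟨ha0, ha1⟩ := ha
  obtain ⟨hb0, hb1⟩ := hb
  have hlo : |b - a| ≤ 2 * ((a + b) / 2) := abs_le.2 ⟨by linarith, by linarith⟩
  have hhi : |b - a| ≤ 2 - 2 * ((a + b) / 2) := abs_le.2 ⟨by linarith, by linarith⟩
  have he0 : 0 ≤ |b - a| := abs_nonneg _
  have hsq : (a ^ 2 + b ^ 2) / 2 = ((a + b) / 2) ^ 2 + |b - a| ^ 2 / 4 := by rw [sq_abs]; ring
  rw [hsq]
  set m := (a + b) / 2
  set e := |b - a|
  -- a quadratic in `(m, e)` on the triangle `0 ≤ e ≤ min (2m) (2 - 2m)`, least at `(1/2, 2/3)`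
  rcases le_or_gt m (1 / 3) with hm | hm
  · have := hH (1 / 3) (by norm_num)
    rw [abs_of_nonneg (by linarith)] at this
    nlinarith [mul_le_mul_of_nonneg_left this he0, sq_nonneg (m - 7 / 24),
      mul_nonneg (by linarith : 0 ≤ 2 * m - e) (by linarith : 0 ≤ 2 / 3 - m - (e + 2 * m) / 4)]
  rcases le_or_gt (2 / 3) m with hm' | hm'
  · have := hH (2 / 3) (by norm_num)
    rw [abs_of_nonpos (by linarith)] at this
    nlinarith [mul_le_mul_of_nonneg_left this he0, sq_nonneg (m - 17 / 24),
      mul_nonneg (by linarith : 0 ≤ 2 - 2 * m - e)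
        (by linarith : 0 ≤ m - 1 / 3 - (e + 2 - 2 * m) / 4)]
  · have := hH m ⟨hm.le, hm'.le⟩
    rw [sub_self, abs_zero, add_zero] at this
    nlinarith [mul_le_mul_of_nonneg_left this he0, sq_nonneg (m - 1 / 2), sq_nonneg (e - 2 / 3)]

theorem optimal_two_points (P : Measure ℝ) [IsProbabilityMeasure P]
    (hP : P = (1 / 2 : ℝ≥0∞) • P.map T1 + (1 / 2 : ℝ≥0∞) • P.map T2) :
    (∫ x, min (rho x (1 / 6, 1 / 2)) (rho x (5 / 6, 1 / 2)) ∂P) = 19 / 72 ∧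
      ∀ a₁ ∈ Icc (0 : ℝ) 1, ∀ a₂ ∈ Icc (0 : ℝ) 1,
        19 / 72 ≤ ∫ x, min (rho x (a₁, 1 / 2)) (rho x (a₂, 1 / 2)) ∂P := by
  have hP : IsCantorMeasure P := hP
  refine ⟨?_, fun a₁ ha₁ a₂ ha₂ => ?_⟩
  · rw [hP.integral_min_rho, hP.integral_abs_sub_of_mem_Icc (by norm_num)]
    norm_num
  · rw [hP.integral_min_rho]
    refine nineteen_div_seventyTwo_le ha₁ ha₂ fun c hc => ?_
    simpa only [hP.integral_abs_sub_of_mem_Icc hc] using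
      integral_abs_sub_le (hP.integrable continuous_id) _ c
end
end

section
/- Let V_n denote the nth constrained quantization error for the Cantor measure P with constraints S_j = {(x,1/j) : 0 ≤ x ≤ 1}, and suppose an optimal set α_n ⊆ S_n of n points splits as β₁ = U_n(α_n) ∩ [0,1/3] with card(β₁) = n₁ and β₂ = U_n(α_n) ∩ [2/3,1] with card(β₂) = n - n₁. Then V_n = (1/18)(V_{n₁} + V_{n-n₁} - 1/n₁² - 1/(n-n₁)²) + 1/n². -/
open MeasureTheory Real Set Filter
open scoped ENNReal Topology

noncomputable section

/-!
Every point of an admissible codebook for `Vc P k` has height at least `1 / k`, and lowering all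
heights to `1 / k` only decreases `rho`; so `Vc P k` is the error `quantError P k` of codebooks
in `[0, 1]` on the line, plus `1 / k ^ 2`. The measure `P` is carried by `[0, 1]`, and for
codebooks `A, B ⊆ [0, 1]` the points of `T1 '' [0, 1]` are served by `T1 '' A` and those of
`T2 '' [0, 1]` by `T2 '' B`; self-similarity of `P` then gives
`sqDistortion P (T1 '' A ∪ T2 '' B) = (sqDistortion P A + sqDistortion P B) / 18`.
This yields `18 W n ≤ W n₁ + W (n - n₁)` for `W = quantError P` in general, and the reverse
inequality from the optimal `α`, whose first coordinates are of the form `T1 '' A ∪ T2 '' B`.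
-/

lemma continuous_iInf_of_finite {X ι : Type*} [TopologicalSpace X] [Finite ι] [Nonempty ι]
    {g : ι → X → ℝ} (hg : ∀ i, Continuous (g i)) : Continuous fun x => ⨅ i, g i x := by
  have := Fintype.ofFinite ι
  simp_rw [← Finset.inf'_univ_eq_ciInf]
  exact Continuous.finset_inf'_apply Finset.univ_nonempty fun i _ => hg i

lemma Continuous.integrable_of_ae_mem {X : Type*} [TopologicalSpace X] [T2Space X]
    [MeasurableSpace X] [OpensMeasurableSpace X] {μ : Measure X} [IsFiniteMeasure μ]
    {K : Set X} (hK : IsCompact K) (hμK : ∀ᵐ x ∂μ, x ∈ K) {f : X → ℝ} (hf : Continuous f) :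
    Integrable f μ := by
  rw [← Measure.restrict_eq_self_of_ae_mem hμK]
  exact hf.continuousOn.integrableOn_compact hK

lemma continuous_T1 : Continuous T1 := by unfold T1; fun_prop

lemma continuous_T2 : Continuous T2 := by unfold T2; fun_prop

lemma mapsTo_T1 : MapsTo T1 (Icc 0 1) (Icc 0 1) := fun x hx => by
  simp only [T1, mem_Icc] at hx ⊢
  constructor <;> linarith [hx.1, hx.2]

lemma mapsTo_T2 : MapsTo T2 (Icc 0 1) (Icc 0 1) := fun x hx => by
  simp only [T2, mem_Icc] at hx ⊢
  constructor <;> linarith [hx.1, hx.2]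

section SelfSimilar

variable {P : Measure ℝ}

lemma measure_eq_of_selfSimilar
    (hP : P = (1 / 2 : ℝ≥0∞) • P.map T1 + (1 / 2 : ℝ≥0∞) • P.map T2)
    {s : Set ℝ} (hs : MeasurableSet s) :
    P s = 2⁻¹ * P (T1 ⁻¹' s) + 2⁻¹ * P (T2 ⁻¹' s) := by
  conv_lhs => rw [hP]
  simp [Measure.map_apply continuous_T1.measurable hs, Measure.map_apply continuous_T2.measurable hs]

lemma measure_compl_Icc_le_of_selfSimilar
    (hP : P = (1 / 2 : ℝ≥0∞) • P.map T1 + (1 / 2 : ℝ≥0∞) • P.map T2) (t : ℝ) :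
    P (Icc (-t) (1 + t))ᶜ ≤ P (Icc (-(3 * t)) (1 + 3 * t))ᶜ := by
  have h₁ : T1 ⁻¹' (Icc (-t) (1 + t))ᶜ ⊆ (Icc (-(3 * t)) (1 + 3 * t))ᶜ := by
    refine compl_subset_compl.2 fun x hx => ?_
    simp only [mem_Icc, T1] at hx ⊢
    constructor <;> linarith [hx.1, hx.2]
  have h₂ : T2 ⁻¹' (Icc (-t) (1 + t))ᶜ ⊆ (Icc (-(3 * t)) (1 + 3 * t))ᶜ := by
    refine compl_subset_compl.2 fun x hx => ?_
    simp only [mem_Icc, T2] at hx ⊢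
    constructor <;> linarith [hx.1, hx.2]
  rw [measure_eq_of_selfSimilar hP measurableSet_Icc.compl]
  calc _ ≤ 2⁻¹ * P (Icc (-(3 * t)) (1 + 3 * t))ᶜ + 2⁻¹ * P (Icc (-(3 * t)) (1 + 3 * t))ᶜ := by
        gcongr
    _ = _ := by rw [← add_mul, ENNReal.inv_two_add_inv_two, one_mul]

lemma measure_compl_Icc_eq_zero_of_selfSimilar [IsFiniteMeasure P]
    (hP : P = (1 / 2 : ℝ≥0∞) • P.map T1 + (1 / 2 : ℝ≥0∞) • P.map T2) {t : ℝ} (ht : 0 < t) :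
    P (Icc (-t) (1 + t))ᶜ = 0 := by
  set U : ℝ → Set ℝ := fun s => (Icc (-s) (1 + s))ᶜ
  have hU : Antitone U := fun s s' hss' =>
    compl_subset_compl.2 (Icc_subset_Icc (by linarith) (by linarith))
  have hU_empty : ⋂ s, U s = ∅ := eq_empty_of_forall_notMem fun x hx =>
    mem_iInter.1 hx |x| ⟨by linarith [neg_abs_le x], by linarith [le_abs_self x]⟩
  have hlim : Tendsto (P ∘ U) atTop (𝓝 0) := by
    have := tendsto_measure_iInter_atTop
      (fun s => measurableSet_Icc.compl.nullMeasurableSet) hU ⟨0, measure_ne_top P (U 0)⟩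
    rwa [hU_empty, measure_empty] at this
  have hiter : ∀ k : ℕ, P (U t) ≤ P (U (3 ^ k * t)) := by
    intro k
    induction k with
    | zero => simp
    | succ k ih =>
      rw [show 3 ^ (k + 1) * t = 3 * (3 ^ k * t) by ring]
      exact ih.trans (measure_compl_Icc_le_of_selfSimilar hP _)
  have h3k : Tendsto (fun k : ℕ => 3 ^ k * t) atTop atTop :=
    (tendsto_pow_atTop_atTop_of_one_lt (by norm_num)).atTop_mul_const ht
  exact nonpos_iff_eq_zero.1 (ge_of_tendsto' (hlim.comp h3k) hiter)

lemma ae_mem_Icc_of_selfSimilar [IsFiniteMeasure P]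
    (hP : P = (1 / 2 : ℝ≥0∞) • P.map T1 + (1 / 2 : ℝ≥0∞) • P.map T2) :
    ∀ᵐ x ∂P, x ∈ Icc (0 : ℝ) 1 := by
  have h : ∀ᵐ x ∂P, ∀ k : ℕ, x ∈ Icc (-(1 / (k + 1 : ℝ))) (1 + 1 / (k + 1 : ℝ)) :=
    ae_all_iff.2 fun k => mem_ae_iff.2 (measure_compl_Icc_eq_zero_of_selfSimilar hP (by positivity))
  filter_upwards [h] with x hx
  constructor
  · refine le_of_forall_pos_lt_add fun ε hε => ?_
    obtain ⟨k, hk⟩ := exists_nat_one_div_lt hε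
    linarith [(hx k).1]
  · refine le_of_forall_pos_lt_add fun ε hε => ?_
    obtain ⟨k, hk⟩ := exists_nat_one_div_lt hε
    linarith [(hx k).2]

lemma integral_eq_of_selfSimilar [IsFiniteMeasure P]
    (hP : P = (1 / 2 : ℝ≥0∞) • P.map T1 + (1 / 2 : ℝ≥0∞) • P.map T2)
    {f : ℝ → ℝ} (hf : Continuous f) :
    ∫ x, f x ∂P = (∫ x, f (T1 x) ∂P + ∫ x, f (T2 x) ∂P) / 2 := by
  have hint : ∀ T : ℝ → ℝ, Continuous T → Integrable f (P.map T) := fun T hT =>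
    (integrable_map_measure hf.aestronglyMeasurable hT.aemeasurable).2
      ((hf.comp hT).integrable_of_ae_mem isCompact_Icc (ae_mem_Icc_of_selfSimilar hP))
  conv_lhs => rw [hP]
  rw [integral_add_measure ((hint T1 continuous_T1).smul_measure (by simp))
      ((hint T2 continuous_T2).smul_measure (by simp)),
    integral_smul_measure, integral_smul_measure,
    integral_map continuous_T1.aemeasurable hf.aestronglyMeasurable,
    integral_map continuous_T2.aemeasurable hf.aestronglyMeasurable]
  simp only [one_div, ENNReal.toReal_inv, ENNReal.toReal_ofNat, smul_eq_mul]
  ring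

end SelfSimilar

def nearestSqDist (A : Finset ℝ) (x : ℝ) : ℝ := ⨅ a : A, (x - a) ^ 2

section NearestSqDist

variable {A B : Finset ℝ} {x a c : ℝ}

lemma nearestSqDist_nonneg : 0 ≤ nearestSqDist A x :=
  Real.iInf_nonneg fun _ => sq_nonneg _

lemma nearestSqDist_le (ha : a ∈ A) : nearestSqDist A x ≤ (x - a) ^ 2 :=
  ciInf_le ⟨0, by rintro _ ⟨b, rfl⟩; positivity⟩ (⟨a, ha⟩ : A)

lemma le_nearestSqDist (hA : A.Nonempty) (h : ∀ a ∈ A, c ≤ (x - a) ^ 2) :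
    c ≤ nearestSqDist A x :=
  have := hA.to_subtype
  le_ciInf fun a => h a a.2

lemma continuous_nearestSqDist (hA : A.Nonempty) : Continuous (nearestSqDist A) :=
  have := hA.to_subtype
  continuous_iInf_of_finite fun _ => by fun_prop

lemma nearestSqDist_image {T : ℝ → ℝ} {r : ℝ} (hr : 0 < r)
    (hT : ∀ x y, (T x - T y) ^ 2 = r * (x - y) ^ 2) (hA : A.Nonempty) :
    nearestSqDist (A.image T) (T x) = r * nearestSqDist A x := by
  refine le_antisymm ?_ (le_nearestSqDist (hA.image T) ?_)
  · rw [← div_le_iff₀' hr]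
    refine le_nearestSqDist hA fun a ha => ?_
    rw [div_le_iff₀' hr, ← hT]
    exact nearestSqDist_le (Finset.mem_image_of_mem T ha)
  · simp only [Finset.mem_image, forall_exists_index, and_imp]
    rintro _ a ha rfl
    rw [hT]
    exact mul_le_mul_of_nonneg_left (nearestSqDist_le ha) hr.le

lemma nearestSqDist_union_of_le (hA : A.Nonempty)
    (h : ∀ a ∈ A, ∀ b ∈ B, (x - a) ^ 2 ≤ (x - b) ^ 2) :
    nearestSqDist (A ∪ B) x = nearestSqDist A x := by
  refine le_antisymm (le_nearestSqDist hA fun a ha => nearestSqDist_le (Finset.mem_union_left B ha))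
    (le_nearestSqDist (hA.mono Finset.subset_union_left) fun b hb => ?_)
  obtain ⟨a, ha⟩ := hA
  rcases Finset.mem_union.1 hb with hb | hb
  · exact nearestSqDist_le hb
  · exact (nearestSqDist_le ha).trans (h a ha b hb)

end NearestSqDist

lemma sq_T1_sub_T1_le_sq_T1_sub_T2 {x a b : ℝ} (hx : x ∈ Icc (0 : ℝ) 1)
    (ha : a ∈ Icc (0 : ℝ) 1) (hb : b ∈ Icc (0 : ℝ) 1) :
    (T1 x - T1 a) ^ 2 ≤ (T1 x - T2 b) ^ 2 := by
  simp only [T1, T2, mem_Icc] at *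
  nlinarith

lemma sq_T2_sub_T2_le_sq_T2_sub_T1 {x a b : ℝ} (hx : x ∈ Icc (0 : ℝ) 1)
    (ha : a ∈ Icc (0 : ℝ) 1) (hb : b ∈ Icc (0 : ℝ) 1) :
    (T2 x - T2 b) ^ 2 ≤ (T2 x - T1 a) ^ 2 := by
  simp only [T1, T2, mem_Icc] at *
  nlinarith

lemma sq_T1_sub_T1 (x y : ℝ) : (T1 x - T1 y) ^ 2 = 1 / 9 * (x - y) ^ 2 := by
  simp only [T1]; ring

lemma sq_T2_sub_T2 (x y : ℝ) : (T2 x - T2 y) ^ 2 = 1 / 9 * (x - y) ^ 2 := by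
  simp only [T2]; ring

def sqDistortion (P : Measure ℝ) (A : Finset ℝ) : ℝ := ∫ x, nearestSqDist A x ∂P

lemma sqDistortion_image_T1_union_image_T2 {P : Measure ℝ} [IsFiniteMeasure P]
    (hP : P = (1 / 2 : ℝ≥0∞) • P.map T1 + (1 / 2 : ℝ≥0∞) • P.map T2)
    {A B : Finset ℝ} (hA : A.Nonempty) (hB : B.Nonempty)
    (hA₁ : ↑A ⊆ Icc (0 : ℝ) 1) (hB₁ : ↑B ⊆ Icc (0 : ℝ) 1) :
    sqDistortion P (A.image T1 ∪ B.image T2) = (sqDistortion P A + sqDistortion P B) / 18 := by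
  have hT1 : ∀ x ∈ Icc (0 : ℝ) 1,
      nearestSqDist (A.image T1 ∪ B.image T2) (T1 x) = 1 / 9 * nearestSqDist A x := by
    intro x hx
    rw [nearestSqDist_union_of_le (hA.image T1), nearestSqDist_image (by norm_num) sq_T1_sub_T1 hA]
    simp only [Finset.mem_image, forall_exists_index, and_imp]
    rintro _ a ha rfl _ b hb rfl
    exact sq_T1_sub_T1_le_sq_T1_sub_T2 hx (hA₁ ha) (hB₁ hb)
  have hT2 : ∀ x ∈ Icc (0 : ℝ) 1,
      nearestSqDist (A.image T1 ∪ B.image T2) (T2 x) = 1 / 9 * nearestSqDist B x := by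
    intro x hx
    rw [Finset.union_comm, nearestSqDist_union_of_le (hB.image T2),
      nearestSqDist_image (by norm_num) sq_T2_sub_T2 hB]
    simp only [Finset.mem_image, forall_exists_index, and_imp]
    rintro _ b hb rfl _ a ha rfl
    exact sq_T2_sub_T2_le_sq_T2_sub_T1 hx (hA₁ ha) (hB₁ hb)
  have hsupp := ae_mem_Icc_of_selfSimilar hP
  rw [sqDistortion, integral_eq_of_selfSimilar hP
      (continuous_nearestSqDist ((hA.image T1).mono Finset.subset_union_left)),
    integral_congr_ae (hsupp.mono hT1), integral_congr_ae (hsupp.mono hT2),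
    integral_const_mul, integral_const_mul, sqDistortion, sqDistortion]
  ring

section FlatCodebook

variable {α : Finset (ℝ × ℝ)} {x b : ℝ}

lemma nearestSqDist_fst_add_sq_le_iInf_rho (hα : α.Nonempty) (hb : ∀ p ∈ α, b ^ 2 ≤ p.2 ^ 2) :
    nearestSqDist (α.image Prod.fst) x + b ^ 2 ≤ ⨅ p : (↑α : Set (ℝ × ℝ)), rho x p :=
  have := hα.to_set.to_subtype
  le_ciInf fun p => add_le_add (nearestSqDist_le (Finset.mem_image_of_mem _ p.2)) (hb p p.2)

lemma iInf_rho_eq_of_forall_snd_eq (hα : α.Nonempty) (hb : ∀ p ∈ α, p.2 = b) :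
    ⨅ p : (↑α : Set (ℝ × ℝ)), rho x p = nearestSqDist (α.image Prod.fst) x + b ^ 2 := by
  refine le_antisymm ?_ (nearestSqDist_fst_add_sq_le_iInf_rho hα fun p hp => (hb p hp).symm ▸ le_rfl)
  rw [← sub_le_iff_le_add]
  refine le_nearestSqDist (hα.image _) ?_
  simp only [Finset.mem_image, forall_exists_index, and_imp]
  rintro _ p hp rfl
  have hle : ⨅ q : (↑α : Set (ℝ × ℝ)), rho x q ≤ rho x p :=
    ciInf_le ⟨0, by rintro _ ⟨q, rfl⟩; exact add_nonneg (sq_nonneg _) (sq_nonneg _)⟩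
      (⟨p, hp⟩ : (↑α : Set (ℝ × ℝ)))
  rw [rho, hb p hp] at hle
  linarith

lemma continuous_iInf_rho (hα : α.Nonempty) :
    Continuous fun x => ⨅ p : (↑α : Set (ℝ × ℝ)), rho x p :=
  have := hα.to_set.to_subtype
  continuous_iInf_of_finite fun _ => by unfold rho; fun_prop

variable {P : Measure ℝ} [IsProbabilityMeasure P]

lemma integral_nearestSqDist_add (hsupp : ∀ᵐ x ∂P, x ∈ Icc (0 : ℝ) 1) {A : Finset ℝ}
    (hA : A.Nonempty) (c : ℝ) : ∫ x, (nearestSqDist A x + c) ∂P = sqDistortion P A + c := by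
  rw [integral_add ((continuous_nearestSqDist hA).integrable_of_ae_mem isCompact_Icc hsupp)
    (integrable_const c), integral_const, sqDistortion]
  simp

lemma distortion_eq_of_forall_snd_eq (hsupp : ∀ᵐ x ∂P, x ∈ Icc (0 : ℝ) 1)
    (hα : α.Nonempty) (hb : ∀ p ∈ α, p.2 = b) :
    distortion P ↑α = sqDistortion P (α.image Prod.fst) + b ^ 2 := by
  simp_rw [distortion, iInf_rho_eq_of_forall_snd_eq hα hb]
  exact integral_nearestSqDist_add hsupp (hα.image _) _

lemma sqDistortion_add_sq_le_distortion (hsupp : ∀ᵐ x ∂P, x ∈ Icc (0 : ℝ) 1)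
    (hα : α.Nonempty) (hb : ∀ p ∈ α, b ^ 2 ≤ p.2 ^ 2) :
    sqDistortion P (α.image Prod.fst) + b ^ 2 ≤ distortion P ↑α := by
  have hint := (continuous_nearestSqDist (hα.image Prod.fst)).integrable_of_ae_mem isCompact_Icc hsupp
  calc sqDistortion P (α.image Prod.fst) + b ^ 2
      = ∫ x, (nearestSqDist (α.image Prod.fst) x + b ^ 2) ∂P :=
        (integral_nearestSqDist_add hsupp (hα.image _) _).symm
    _ ≤ distortion P ↑α :=
        integral_mono (hint.add (integrable_const _))
          ((continuous_iInf_rho hα).integrable_of_ae_mem isCompact_Icc hsupp)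
          fun _ => nearestSqDist_fst_add_sq_le_iInf_rho hα hb

end FlatCodebook

open scoped Pointwise

def codebooks (k : ℕ) : Set (Finset ℝ) := {A | A.Nonempty ∧ A.card ≤ k ∧ ↑A ⊆ Icc (0 : ℝ) 1}

def quantError (P : Measure ℝ) (k : ℕ) : ℝ := sInf (sqDistortion P '' codebooks k)

section QuantError

variable {P : Measure ℝ} {k l : ℕ}

lemma codebooks_nonempty (hk : 1 ≤ k) : (codebooks k).Nonempty :=
  ⟨{0}, Finset.singleton_nonempty 0, by simpa using hk, by simp⟩

lemma image_mem_codebooks {β : Type*} {s : Finset β} {f : β → ℝ} (hs : s.Nonempty)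
    (hcard : s.card ≤ k) (hf : ∀ p ∈ s, f p ∈ Icc (0 : ℝ) 1) : s.image f ∈ codebooks k := by
  refine ⟨hs.image f, Finset.card_image_le.trans hcard, ?_⟩
  simp only [Finset.coe_image, image_subset_iff]
  exact hf

lemma image_T1_union_image_T2_mem_codebooks {A B : Finset ℝ} (hA : A ∈ codebooks k)
    (hB : B ∈ codebooks l) : A.image T1 ∪ B.image T2 ∈ codebooks (k + l) := by
  refine ⟨(hA.1.image T1).mono Finset.subset_union_left, (Finset.card_union_le _ _).trans
    (add_le_add (Finset.card_image_le.trans hA.2.1) (Finset.card_image_le.trans hB.2.1)), ?_⟩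
  rw [Finset.coe_union, Finset.coe_image, Finset.coe_image]
  exact union_subset (mapsTo_T1.mono_left hA.2.2).image_subset
    (mapsTo_T2.mono_left hB.2.2).image_subset

lemma bddBelow_sqDistortion_image (S : Set (Finset ℝ)) : BddBelow (sqDistortion P '' S) :=
  ⟨0, forall_mem_image.2 fun _ _ => integral_nonneg fun _ => nearestSqDist_nonneg⟩

lemma quantError_le {A : Finset ℝ} (hA : A ∈ codebooks k) : quantError P k ≤ sqDistortion P A :=
  csInf_le (bddBelow_sqDistortion_image _) (mem_image_of_mem _ hA)

lemma quantError_add_le [IsFiniteMeasure P]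
    (hP : P = (1 / 2 : ℝ≥0∞) • P.map T1 + (1 / 2 : ℝ≥0∞) • P.map T2) (hk : 1 ≤ k) (hl : 1 ≤ l) :
    18 * quantError P (k + l) ≤ quantError P k + quantError P l := by
  unfold quantError
  rw [← csInf_add ((codebooks_nonempty hk).image _)
    (bddBelow_sqDistortion_image _) ((codebooks_nonempty hl).image _)
    (bddBelow_sqDistortion_image _)]
  refine le_csInf (((codebooks_nonempty hk).image _).add ((codebooks_nonempty hl).image _)) ?_
  rintro _ ⟨_, ⟨A, hA, rfl⟩, _, ⟨B, hB, rfl⟩, rfl⟩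
  have := quantError_le (P := P) (image_T1_union_image_T2_mem_codebooks hA hB)
  rw [sqDistortion_image_T1_union_image_T2 hP hA.1 hB.1 hA.2.2 hB.2.2] at this
  unfold quantError at this
  linarith

lemma mem_Icc_and_le_snd_of_mem_iUnion_Sj {p : ℝ × ℝ} (hp : p ∈ ⋃ j ∈ Finset.Icc 1 k, Sj j) :
    p.1 ∈ Icc (0 : ℝ) 1 ∧ 1 / (k : ℝ) ≤ p.2 := by
  simp only [mem_iUnion, Finset.mem_Icc, exists_prop] at hp
  obtain ⟨j, ⟨hj₁, hjk⟩, hp₁, hp₂⟩ := hp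
  refine ⟨hp₁, hp₂ ▸ one_div_le_one_div_of_le (by exact_mod_cast hj₁) (by exact_mod_cast hjk)⟩

lemma Vc_le_distortion {δ : Finset (ℝ × ℝ)} (hδ : δ.Nonempty) (hcard : δ.card ≤ k)
    (hsub : (↑δ : Set (ℝ × ℝ)) ⊆ ⋃ j ∈ Finset.Icc 1 k, Sj j) : Vc P k ≤ distortion P ↑δ :=
  csInf_le ⟨0, by
    rintro _ ⟨α, -, -, -, rfl⟩
    exact integral_nonneg fun _ => Real.iInf_nonneg fun _ => add_nonneg (sq_nonneg _) (sq_nonneg _)⟩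
    ⟨δ, hδ, hcard, hsub, rfl⟩

lemma exists_distortion_eq_sqDistortion_add [IsProbabilityMeasure P]
    (hsupp : ∀ᵐ x ∂P, x ∈ Icc (0 : ℝ) 1) (hk : 1 ≤ k) {A : Finset ℝ} (hA : A ∈ codebooks k) :
    ∃ δ : Finset (ℝ × ℝ), δ.Nonempty ∧ δ.card ≤ k ∧
      (↑δ : Set (ℝ × ℝ)) ⊆ ⋃ j ∈ Finset.Icc 1 k, Sj j ∧
      distortion P ↑δ = sqDistortion P A + (1 / (k : ℝ)) ^ 2 := by
  refine ⟨A.image fun a => (a, 1 / (k : ℝ)), hA.1.image _, Finset.card_image_le.trans hA.2.1,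
    ?_, ?_⟩
  · intro p hp
    simp only [Finset.coe_image, mem_image] at hp
    obtain ⟨a, ha, rfl⟩ := hp
    exact mem_biUnion (Finset.mem_Icc.2 ⟨hk, le_rfl⟩) ⟨hA.2.2 ha, rfl⟩
  · rw [distortion_eq_of_forall_snd_eq hsupp (hA.1.image _) (b := 1 / (k : ℝ)) (by simp),
      Finset.image_image]
    simp [Function.comp_def]

lemma Vc_eq_quantError_add [IsProbabilityMeasure P] (hsupp : ∀ᵐ x ∂P, x ∈ Icc (0 : ℝ) 1)
    (hk : 1 ≤ k) : Vc P k = quantError P k + 1 / (k : ℝ) ^ 2 := by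
  rw [← one_div_pow]
  refine le_antisymm ?_ ?_
  · rw [← sub_le_iff_le_add]
    refine le_csInf ((codebooks_nonempty hk).image _) (forall_mem_image.2 fun A hA => ?_)
    obtain ⟨δ, hδ, hcard, hsub, hδA⟩ := exists_distortion_eq_sqDistortion_add hsupp hk hA
    linarith [Vc_le_distortion (P := P) hδ hcard hsub]
  · obtain ⟨A, hA⟩ := codebooks_nonempty hk
    obtain ⟨δ, hδ, hcard, hsub, -⟩ := exists_distortion_eq_sqDistortion_add hsupp hk hA
    refine le_csInf ⟨_, δ, hδ, hcard, hsub, rfl⟩ ?_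
    rintro _ ⟨δ, hδ, hcard, hsub, rfl⟩
    have hb : ∀ p ∈ δ, (1 / (k : ℝ)) ^ 2 ≤ p.2 ^ 2 := fun p hp =>
      pow_le_pow_left₀ (by positivity) (mem_Icc_and_le_snd_of_mem_iUnion_Sj (hsub hp)).2 2
    refine le_trans ?_ (sqDistortion_add_sq_le_distortion hsupp hδ hb)
    gcongr
    exact quantError_le (image_mem_codebooks hδ hcard fun p hp =>
      (mem_Icc_and_le_snd_of_mem_iUnion_Sj (hsub hp)).1)

end QuantError

lemma exists_codebooks_image_fst_eq {α β₁ β₂ : Finset (ℝ × ℝ)} {k l : ℕ} (hk : 1 ≤ k) (hl : 1 ≤ l)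
    (hcard : α.card ≤ k + l)
    (hβ₁ : (↑β₁ : Set (ℝ × ℝ)) = ↑α ∩ {p : ℝ × ℝ | p.1 ∈ Icc (0 : ℝ) (1 / 3)})
    (hβ₂ : (↑β₂ : Set (ℝ × ℝ)) = ↑α ∩ {p : ℝ × ℝ | p.1 ∈ Icc (2 / 3 : ℝ) 1})
    (hcard₁ : β₁.card = k) (hcard₂ : β₂.card = l) :
    ∃ A ∈ codebooks k, ∃ B ∈ codebooks l, α.image Prod.fst = A.image T1 ∪ B.image T2 := by
  have hmem₁ (p : ℝ × ℝ) : p ∈ β₁ ↔ p ∈ α ∧ p.1 ∈ Icc (0 : ℝ) (1 / 3) := Set.ext_iff.1 hβ₁ p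
  have hmem₂ (p : ℝ × ℝ) : p ∈ β₂ ↔ p ∈ α ∧ p.1 ∈ Icc (2 / 3 : ℝ) 1 := Set.ext_iff.1 hβ₂ p
  have hα : β₁ ∪ β₂ = α := by
    refine Finset.eq_of_subset_of_card_le
      (Finset.union_subset (fun p hp => ((hmem₁ p).1 hp).1) fun p hp => ((hmem₂ p).1 hp).1) ?_
    rw [Finset.card_union_of_disjoint (Finset.disjoint_left.2 fun {p} h₁ h₂ => by
      linarith [((hmem₁ p).1 h₁).2.2, ((hmem₂ p).1 h₂).2.1])]
    omega
  refine ⟨β₁.image fun p => 3 * p.1, ?_, β₂.image fun p => 3 * p.1 - 2, ?_, ?_⟩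
  · refine image_mem_codebooks (Finset.card_pos.1 (by omega)) hcard₁.le fun p hp => ?_
    have := ((hmem₁ p).1 hp).2
    simp only [mem_Icc] at this ⊢
    constructor <;> linarith
  · refine image_mem_codebooks (Finset.card_pos.1 (by omega)) hcard₂.le fun p hp => ?_
    have := ((hmem₂ p).1 hp).2
    simp only [mem_Icc] at this ⊢
    constructor <;> linarith
  · rw [← hα, Finset.image_union, Finset.image_image, Finset.image_image]
    congr 2 <;> funext p <;> simp only [Function.comp_apply, T1, T2] <;> ring

theorem quantization_error_recursion_general (P : Measure ℝ) [IsProbabilityMeasure P]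
    (hP : P = (1 / 2 : ℝ≥0∞) • P.map T1 + (1 / 2 : ℝ≥0∞) • P.map T2)
    (n n₁ : ℕ) (hn₁ : 1 ≤ n₁) (hn₁n : n₁ < n)
    (α : Finset (ℝ × ℝ)) (hne : α.Nonempty) (hcard : α.card ≤ n)
    (hsubS : (↑α : Set (ℝ × ℝ)) ⊆ Sj n)
    (hopt : distortion P (↑α : Set (ℝ × ℝ)) = Vc P n)
    (β₁ β₂ : Finset (ℝ × ℝ))
    (hβ₁ : (↑β₁ : Set (ℝ × ℝ)) = ↑α ∩ {p : ℝ × ℝ | p.1 ∈ Icc (0 : ℝ) (1 / 3)})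
    (hβ₂ : (↑β₂ : Set (ℝ × ℝ)) = ↑α ∩ {p : ℝ × ℝ | p.1 ∈ Icc (2 / 3 : ℝ) 1})
    (hcard₁ : β₁.card = n₁) (hcard₂ : β₂.card = n - n₁) :
    Vc P n =
      (1 / 18) * (Vc P n₁ + Vc P (n - n₁) - 1 / (n₁ : ℝ) ^ 2 - 1 / ((n - n₁ : ℕ) : ℝ) ^ 2) +
        1 / (n : ℝ) ^ 2 := by
  have hsupp := ae_mem_Icc_of_selfSimilar hP
  have hm : 1 ≤ n - n₁ := by omega
  have hn : n₁ + (n - n₁) = n := by omega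
  obtain ⟨A, hA, B, hB, hfst⟩ :=
    exists_codebooks_image_fst_eq hn₁ hm (by omega) hβ₁ hβ₂ hcard₁ hcard₂
  have hopt' : quantError P n = (sqDistortion P A + sqDistortion P B) / 18 := by
    have := Vc_eq_quantError_add hsupp (by omega : 1 ≤ n)
    rw [← hopt, distortion_eq_of_forall_snd_eq hsupp hne fun p hp => (hsubS hp).2, hfst,
      sqDistortion_image_T1_union_image_T2 hP hA.1 hB.1 hA.2.2 hB.2.2, one_div_pow] at this
    linarith
  have hsubadd := quantError_add_le hP hn₁ hm
  rw [hn] at hsubadd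
  rw [Vc_eq_quantError_add hsupp (by omega), Vc_eq_quantError_add hsupp hn₁,
    Vc_eq_quantError_add hsupp hm]
  linarith [quantError_le (P := P) hA, quantError_le (P := P) hB]

theorem quantization_error_recursion (P : Measure ℝ) [IsProbabilityMeasure P]
    (hP : P = (1 / 2 : ℝ≥0∞) • P.map T1 + (1 / 2 : ℝ≥0∞) • P.map T2)
    (n n₁ : ℕ) (hn : 2 ≤ n) (hn₁ : 1 ≤ n₁) (hn₁n : n₁ < n)
    (α : Finset (ℝ × ℝ)) (hne : α.Nonempty) (hcard : α.card ≤ n)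
    (hsubS : (↑α : Set (ℝ × ℝ)) ⊆ Sj n)
    (hopt : distortion P (↑α : Set (ℝ × ℝ)) = Vc P n)
    (β₁ β₂ : Finset (ℝ × ℝ))
    (hβ₁ : (↑β₁ : Set (ℝ × ℝ)) = ↑α ∩ {p : ℝ × ℝ | p.1 ∈ Icc (0 : ℝ) (1 / 3)})
    (hβ₂ : (↑β₂ : Set (ℝ × ℝ)) = ↑α ∩ {p : ℝ × ℝ | p.1 ∈ Icc (2 / 3 : ℝ) 1})
    (hcard₁ : β₁.card = n₁) (hcard₂ : β₂.card = n - n₁) :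
    Vc P n =
      (1 / 18) * (Vc P n₁ + Vc P (n - n₁) - 1 / (n₁ : ℝ) ^ 2 - 1 / ((n - n₁ : ℕ) : ℝ) ^ 2) +
        1 / (n : ℝ) ^ 2 :=
  quantization_error_recursion_general P hP n n₁ hn₁ hn₁n α hne hcard hsubS hopt β₁ β₂ hβ₁ hβ₂
    hcard₁ hcard₂
end
end
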